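/- arXiv:2302.02209 — 13 statements merged into one kernel-verified Lean document; each statement's English description precedes it below -/
import Mathlib

section
/- Let G=(V,E,R,c) be a knowledge graph and let x: V → ℝ^{d(0)} be an initial feature map with c ≡ x. Then for every R-MPNN with T layers and history function f, and for every 0 ≤ t ≤ T, the relational local 1-WL coloring rwl_1^{(t)} refines the computed feature map h^{(t)}; that is, for all u,v ∈ V, rwl_1^{(t)}(u) = rwl_1^{(t)}(v) implies h_u^{(t)} = h_v^{(t)}. -/
/-- A knowledge graph: a finite set of facts `r(u,v)` (stored as triples `(r,u,v)`)
together with a node coloring. -/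
structure KG (V R D : Type) where
  edges : Finset (R × V × V)
  color : V → D

namespace KG

variable {V R D D₂ X : Type}

/-- For a fact `r(u,v)` we say `u ∈ N_r(v)`.  `G.msgMS g v` is the multiset
`{{ (g w, r) : w ∈ N_r(v), r ∈ R }}`. -/
def msgMS [DecidableEq V] (G : KG V R D) (g : V → X) (v : V) : Multiset (X × R) :=
  (G.edges.val.filter (fun e => e.2.2 = v)).map (fun e => (g e.2.1, e.1))

end KG

/-- Color type of the relational local 1-WL test after `t` rounds (τ is the identity pairing). -/
def Color1 (D R : Type) : ℕ → Type
  | 0 => D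
  | t + 1 => Color1 D R t × Multiset (Color1 D R t × R)

/-- The relational local 1-WL test `rwl₁`. -/
def rwl1 {V R D : Type} [DecidableEq V] (G : KG V R D) : (t : ℕ) → V → Color1 D R t
  | 0 => G.color
  | t + 1 => fun v => (rwl1 G t v, G.msgMS (rwl1 G t) v)

/-- The relational asymmetric local 2-WL test `rawl₂` with initial pairwise coloring `η`. -/
def rawl2 {V R D D₂ : Type} [DecidableEq V] (G : KG V R D) (η : V → V → D₂) :
    (t : ℕ) → V → V → Color1 D₂ R t
  | 0 => η
  | t + 1 => fun u v => (rawl2 G η t u v, G.msgMS (rawl2 G η t u) v)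

/-- Color type of the relational symmetric local 2-WL test after `t` rounds. -/
def Color2 (D R : Type) : ℕ → Type
  | 0 => D
  | t + 1 => Color2 D R t × Multiset (Color2 D R t × R) × Multiset (Color2 D R t × R)

/-- The relational symmetric local 2-WL test `rwl₂` with initial pairwise coloring `η`. -/
def rwl2 {V R D D₂ : Type} [DecidableEq V] (G : KG V R D) (η : V → V → D₂) :
    (t : ℕ) → V → V → Color2 D₂ R t
  | 0 => η
  | t + 1 => fun u v =>
      (rwl2 G η t u v, G.msgMS (fun w => rwl2 G η t w v) u, G.msgMS (rwl2 G η t u) v)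

/-- The augmented knowledge graph `G⁺` with fresh inverse relations (`Sum.inr r` is `r⁻`). -/
def KG.aug {V R D : Type} [DecidableEq V] [DecidableEq R] (G : KG V R D) : KG V (R ⊕ R) D where
  edges := G.edges.image (fun e => (Sum.inl e.1, e.2)) ∪
    (G.edges.filter (fun e => e.2.1 ≠ e.2.2)).image (fun e => (Sum.inr e.1, e.2.2, e.2.1))
  color := G.color

/-- The graph `G²` of pairs: facts `r((u,w),(u,v))` for `r(w,v) ∈ E`, colored by `η`. -/
def KG.sq {V R D D₂ : Type} [Fintype V] [DecidableEq V] [DecidableEq R]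
    (G : KG V R D) (η : V → V → D₂) : KG (V × V) R D₂ where
  edges := (Finset.univ ×ˢ G.edges).image
      (fun p => (p.2.1, (p.1, p.2.2.1), (p.1, p.2.2.2)))
  color := fun p => η p.1 p.2

/-- A relational message passing neural network (R-MPNN) with feature dimensions `d t`:
a history function `f` (non-decreasing, `f t ≤ t`) and, per layer, arbitrary
relation-specific message functions, an aggregation on finite multisets and an update. -/
structure RMPNN (R : Type) (d : ℕ → ℕ) where
  f : ℕ → ℕ
  f_mono : Monotone f
  f_le : ∀ t, f t ≤ t
  M : ℕ → Type
  A : ℕ → Type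
  msg : (t : ℕ) → R → (Fin (d t) → ℝ) → M t
  agg : (t : ℕ) → Multiset (M t) → A t
  upd : (t : ℕ) → (Fin (d (f t)) → ℝ) → A t → Fin (d (t + 1)) → ℝ

/-- Features `h^(t)_v` computed by an R-MPNN on `G` from initial features `x`. -/
def RMPNN.h {V R D : Type} [DecidableEq V] {d : ℕ → ℕ} (N : RMPNN R d) (G : KG V R D)
    (x : V → Fin (d 0) → ℝ) : (t : ℕ) → V → Fin (d t) → ℝ
  | 0 => x
  | t + 1 => fun v =>
      N.upd t (N.h G x (N.f t) v)
        (N.agg t ((G.edges.val.filter (fun e => e.2.2 = v)).map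
          (fun e => N.msg t e.1 (N.h G x t e.2.1))))
termination_by t => t
decreasing_by
  · exact Nat.lt_succ_of_le (N.f_le t)
  · exact Nat.lt_succ_self t

/-- A conditional message passing neural network (C-MPNN) with feature dimensions `d t`;
the relation-specific message functions additionally take the query relation. -/
structure CMPNN (R : Type) (d : ℕ → ℕ) where
  f : ℕ → ℕ
  f_mono : Monotone f
  f_le : ∀ t, f t ≤ t
  M : ℕ → Type
  A : ℕ → Type
  msg : (t : ℕ) → R → (Fin (d t) → ℝ) → R → M t
  agg : (t : ℕ) → Multiset (M t) → A t
  upd : (t : ℕ) → (Fin (d (f t)) → ℝ) → A t → Fin (d (t + 1)) → ℝ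

/-- Features `h^(t)_{v|u,q}` computed by a C-MPNN on `G` for query `q` with
initialization `δ`; `CMPNN.h N G q δ t u v = h_q^(t)(u,v)`. -/
def CMPNN.h {V R D : Type} [DecidableEq V] {d : ℕ → ℕ} (N : CMPNN R d) (G : KG V R D)
    (q : R) (δ : V → V → R → Fin (d 0) → ℝ) : (t : ℕ) → V → V → Fin (d t) → ℝ
  | 0 => fun u v => δ u v q
  | t + 1 => fun u v =>
      N.upd t (N.h G q δ (N.f t) u v)
        (N.agg t ((G.edges.val.filter (fun e => e.2.2 = v)).map
          (fun e => N.msg t e.1 (N.h G q δ t u e.2.1) q)))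
termination_by t => t
decreasing_by
  · exact Nat.lt_succ_of_le (N.f_le t)
  · exact Nat.lt_succ_self t

lemma multiset_map_eq_map_of {α β γ : Type*} (f : α → β) (g : α → γ)
    (hfg : ∀ a b, f a = f b → g a = g b) :
    ∀ s t : Multiset α, s.map f = t.map f → s.map g = t.map g := by
  intro s
  induction s using Multiset.induction with
  | empty =>
    intro t h
    have : t.map f = 0 := h.symm
    rw [Multiset.map_eq_zero] at this
    simp [this]
  | cons a s ih =>
    intro t h
    have hfa : f a ∈ t.map f := by rw [← h]; simp
    obtain ⟨b, hb, hfb⟩ := Multiset.mem_map.mp hfa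
    obtain ⟨t', rfl⟩ := Multiset.exists_cons_of_mem hb
    simp only [Multiset.map_cons] at h
    rw [hfb] at h
    have h' := (Multiset.cons_inj_right _).mp h
    simp only [Multiset.map_cons, ih t' h', hfg b a hfb]

lemma rwl1_pred {V R D : Type} [DecidableEq V] (G : KG V R D) (t : ℕ) (u v : V)
    (h : rwl1 G (t + 1) u = rwl1 G (t + 1) v) : rwl1 G t u = rwl1 G t v := by
  have := congrArg Prod.fst h
  simpa [rwl1] using this

lemma rwl1_mono {V R D : Type} [DecidableEq V] (G : KG V R D) {s t : ℕ} (hst : s ≤ t)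
    (u v : V) (h : rwl1 G t u = rwl1 G t v) : rwl1 G s u = rwl1 G s v := by
  induction t with
  | zero => exact (Nat.le_zero.mp hst) ▸ h
  | succ t ih =>
    rcases Nat.lt_or_ge s (t + 1) with h1 | h1
    · exact ih (Nat.lt_succ_iff.mp h1) (rwl1_pred G t u v h)
    · exact (Nat.le_antisymm hst h1) ▸ h

lemma rmpnn_h_zero {V R D : Type} [DecidableEq V] {d : ℕ → ℕ} (N : RMPNN R d)
    (G : KG V R D) (x : V → Fin (d 0) → ℝ) (v : V) : N.h G x 0 v = x v := by
  rw [RMPNN.h]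

lemma rmpnn_h_succ {V R D : Type} [DecidableEq V] {d : ℕ → ℕ} (N : RMPNN R d)
    (G : KG V R D) (x : V → Fin (d 0) → ℝ) (t : ℕ) (v : V) :
    N.h G x (t + 1) v = N.upd t (N.h G x (N.f t) v)
      (N.agg t ((G.edges.val.filter (fun e => e.2.2 = v)).map
        (fun e => N.msg t e.1 (N.h G x t e.2.1)))) := by
  rw [RMPNN.h]

/-- For a knowledge graph `G = (V,E,R,c)` and an initial feature map `x`
with `c ≡ x`, every R-MPNN with `T` layers and history function `f` is refined by the
relational local 1-WL test: for all `0 ≤ t ≤ T`, if `rwl₁^(t)(u) = rwl₁^(t)(v)` then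
`h^(t)_u = h^(t)_v`. -/
theorem rwl1_refines_rmpnn {V R D : Type} [DecidableEq V] [DecidableEq R]
    (G : KG V R D) (d : ℕ → ℕ) (N : RMPNN R d) (x : V → Fin (d 0) → ℝ)
    (hx : ∀ u v : V, G.color u = G.color v ↔ x u = x v)
    (T : ℕ) (t : ℕ) (ht : t ≤ T) (u v : V)
    (h : rwl1 G t u = rwl1 G t v) :
    N.h G x t u = N.h G x t v := by
  clear ht
  induction t using Nat.strong_induction_on generalizing u v with
  | _ t ih =>
    match t with
    | 0 =>
      rw [rmpnn_h_zero, rmpnn_h_zero]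
      exact (hx u v).mp h
    | t + 1 =>
      have h1 : rwl1 G t u = rwl1 G t v := rwl1_pred G t u v h
      have h2 : G.msgMS (rwl1 G t) u = G.msgMS (rwl1 G t) v := by
        have := congrArg Prod.snd h
        simpa [rwl1] using this
      have hf : N.h G x (N.f t) u = N.h G x (N.f t) v :=
        ih (N.f t) (Nat.lt_succ_of_le (N.f_le t)) u v
          (rwl1_mono G (N.f_le t) u v h1)
      have hmap : ((G.edges.val.filter (fun e => e.2.2 = u)).map
            (fun e => N.msg t e.1 (N.h G x t e.2.1))) =
          ((G.edges.val.filter (fun e => e.2.2 = v)).map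
            (fun e => N.msg t e.1 (N.h G x t e.2.1))) := by
        refine multiset_map_eq_map_of (fun e : R × V × V => (rwl1 G t e.2.1, e.1))
          (fun e => N.msg t e.1 (N.h G x t e.2.1)) ?_ _ _ h2
        intro a b hab
        have hab1 : rwl1 G t a.2.1 = rwl1 G t b.2.1 := congrArg Prod.fst hab
        have hab2 : a.1 = b.1 := congrArg Prod.snd hab
        show N.msg t a.1 (N.h G x t a.2.1) = N.msg t b.1 (N.h G x t b.2.1)
        rw [hab2, ih t (Nat.lt_succ_self t) _ _ hab1]
      rw [rmpnn_h_succ, rmpnn_h_succ, hf, hmap]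
end

section
/- For every knowledge graph G=(V,E,R,c) with n = |V|, every T ≥ 0 and every history function f, there exist an initial feature map x: V → ℝⁿ with c ≡ x, matrices W^{(t)} ∈ ℝ^{n×n} and scalars α_r^{(t)} ∈ ℝ (for r ∈ R and 0 ≤ t < T) such that the feature maps defined by h^{(0)} = x and h_v^{(t+1)} = sign(W^{(t)}·(h_v^{(f(t))} + Σ_{r∈R} Σ_{w∈N_r(v)} α_r^{(t)} h_w^{(t)}) − 𝟙) satisfy h^{(t)} ≡ rwl_1^{(t)} for all 0 ≤ t ≤ T, where sign is applied entrywise and 𝟙 is the all-ones vector. -/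
/-- The concrete R-MPNN model used in the simulation: features in `ℝⁿ`, update
`h_v^(t+1) = sign(W^(t)·(h_v^(f(t)) + Σ_{r∈R} Σ_{w∈N_r(v)} α_r^(t) h_w^(t)) − 𝟙)`,
with `sign` applied entrywise and `𝟙` the all-ones vector. -/
noncomputable def signModel {V R D : Type} [DecidableEq V] {n : ℕ} (G : KG V R D)
    (f : ℕ → ℕ) (hf : ∀ t, f t ≤ t) (x : V → Fin n → ℝ)
    (W : ℕ → Matrix (Fin n) (Fin n) ℝ) (α : ℕ → R → ℝ) :
    (t : ℕ) → V → Fin n → ℝ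
  | 0 => x
  | t + 1 => fun v i => Real.sign
      ((∑ j, W t i j *
        (signModel G f hf x W α (f t) v j +
          ((G.edges.val.filter (fun e => e.2.2 = v)).map
            (fun e => α t e.1 * signModel G f hf x W α t e.2.1 j)).sum)) - 1)
termination_by t => t
decreasing_by
  · exact Nat.lt_succ_of_le (hf t)
  · exact Nat.lt_succ_self t


/-!
Every feature `h^(t)_v` is kept equal to the thermometer code of a rank `ρ_t(v) < n`, the
`±1`-vector whose entries `1, …, ρ_t(v)` are `+1`. Any function of the rank is a linear
functional of its thermometer code. Number the relations occurring in `G` injectively by `idx`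
and take `α_r = x ^ (n * (idx r + 1))` and the functional sending rank `a` to `x ^ a`: it sends
the aggregated vector of `v` to the power sum `∑_{k ∈ m_v} x ^ k` of the multiset
`m_v = {ρ_{f t}(v)} + {ρ_t(w) + n (idx r + 1) : w ∈ N_r(v)}`, which encodes the pair
`(ρ_{f t}(v), {{(ρ_t(w), r)}})`. Distinct multisets have distinct generating polynomials, so for
all but finitely many `x > 0` the power sum separates the `m_v`. The rows of `W^(t)` are
multiples of the functional, placing the threshold of row `i` between the `(i-1)`-st and `i`-th
smallest score, so the layer outputs the thermometer code of the rank of the score. Since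
`f t ≤ t`, `rwl₁^(t+1)` is determined by `rwl₁^(f t)` together with the messages of `rwl₁^(t)`,
and induction on `t` gives `h^(t) ≡ rwl₁^(t)`.
-/

open Matrix

def thermometer {n : ℕ} (a j : Fin n) : ℝ := if 0 < (j : ℕ) ∧ j ≤ a then 1 else -1

theorem thermometer_injective {n : ℕ} : Function.Injective (thermometer (n := n)) := by
  intro a b h
  by_contra hne
  wlog hab : a < b generalizing a b
  · exact this h.symm (Ne.symm hne) (lt_of_le_of_ne (not_lt.1 hab) (Ne.symm hne))
  have := congrFun h b
  simp only [thermometer, le_refl, and_true, not_le.2 hab, and_false, if_false] at this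
  split_ifs at this with hb
  · norm_num at this
  · exact hb (lt_of_le_of_lt (Nat.zero_le _) hab)

theorem exists_dotProduct_thermometer_eq {n : ℕ} (τ : Fin n → ℝ) :
    ∃ c : Fin n → ℝ, ∀ a, c ⬝ᵥ thermometer a = τ a := by
  cases n with
  | zero => exact ⟨0, fun a => a.elim0⟩
  | succ m =>
    let d : Fin m → ℝ := fun k => (τ k.succ - τ k.castSucc) / 2
    refine ⟨Fin.cons (-τ 0 - ∑ k, d k) d, fun a => ?_⟩
    induction a using Fin.induction with
    | zero => simp [dotProduct, Fin.sum_univ_succ, thermometer]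
    | succ a ih =>
      have hstep : thermometer a.succ = thermometer a.castSucc + Pi.single a.succ 2 := by
        ext j
        simp only [thermometer, Pi.add_apply, Pi.single_apply, Fin.le_def, Fin.ext_iff,
          Fin.val_succ, Fin.val_castSucc]
        split_ifs <;> (try norm_num) <;> omega
      rw [hstep, dotProduct_add, ih, dotProduct_single]
      simp [d]

theorem exists_sign_threshold_eq_thermometer {V : Type*} [Fintype V] {n : ℕ}
    (hn : Fintype.card V ≤ n) (s : V → ℝ) (hs : ∀ v, 0 < s v) :
    ∃ (ρ : V → Fin n) (μ : Fin n → ℝ), (∀ u v, ρ u = ρ v ↔ s u = s v) ∧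
      ∀ v i, Real.sign (μ i * s v - 1) = thermometer (ρ v) i := by
  classical
  let S := Finset.univ.image s
  have hk : S.card ≤ n := Finset.card_image_le.trans hn
  let σ := S.orderEmbOfFin rfl
  have hσ : ∀ v, s v ∈ Set.range σ := fun v => by simp [σ, S]
  choose r hr using hσ
  have hσpos : ∀ k, 0 < σ k := fun k => by
    obtain ⟨w, -, hw⟩ := Finset.mem_image.1 (S.orderEmbOfFin_mem rfl k)
    exact hw ▸ hs w
  refine ⟨fun v => Fin.castLE hk (r v), fun i => if h : 0 < (i : ℕ) ∧ (i : ℕ) < S.card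
    then 2 / (σ ⟨i - 1, by omega⟩ + σ ⟨i, h.2⟩) else 0, fun u v => ?_, fun v i => ?_⟩
  · rw [Fin.castLE_inj, ← σ.injective.eq_iff, hr, hr]
  simp only [thermometer, Fin.le_def, Fin.val_castLE]
  by_cases hi : 0 < (i : ℕ) ∧ (i : ℕ) < S.card
  · have hlt : σ ⟨i - 1, by omega⟩ < σ ⟨i, hi.2⟩ := σ.strictMono (Fin.mk_lt_mk.2 (by omega))
    have hden : 0 < σ ⟨i - 1, by omega⟩ + σ ⟨i, hi.2⟩ := add_pos (hσpos _) (hσpos _)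
    rw [dif_pos hi, div_mul_eq_mul_div]
    split_ifs with hle
    · have : σ ⟨i, hi.2⟩ ≤ s v := hr v ▸ σ.monotone (Fin.le_def.2 hle.2)
      rw [Real.sign_of_pos (by rw [sub_pos, one_lt_div hden]; linarith)]
    · have : s v ≤ σ ⟨i - 1, by omega⟩ := hr v ▸ σ.monotone (Fin.le_def.2 (by simp; omega))
      rw [Real.sign_of_neg (by rw [sub_neg, div_lt_one hden]; linarith)]
  · rw [dif_neg hi, zero_mul, zero_sub, Real.sign_of_neg (by norm_num),
      if_neg fun h => hi ⟨h.1, h.2.trans_lt (r v).isLt⟩]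

open Polynomial in
theorem exists_pos_sum_map_pow_injective {ι : Type*} [Finite ι] (m : ι → Multiset ℕ) :
    ∃ x : ℝ, 0 < x ∧
      ∀ i j, ((m i).map (x ^ ·)).sum = ((m j).map (x ^ ·)).sum → m i = m j := by
  classical
  let P : ι → ℝ[X] := fun i => ((m i).map (X ^ ·)).sum
  have hcoeff : ∀ (s : Multiset ℕ) k, ((s.map (X ^ ·)).sum : ℝ[X]).coeff k = s.count k := by
    intro s k
    induction s using Multiset.induction_on with
    | empty => simp
    | cons a s ih => simp [coeff_X_pow, Multiset.count_cons, ih, add_comm]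
  have heval : ∀ i x, (P i).eval x = ((m i).map (x ^ ·)).sum := by
    simp [P, eval_multisetSum, Multiset.map_map]
  have hfin : (⋃ (i) (j) (_ : P i ≠ P j), {x | (P i - P j).IsRoot x}).Finite :=
    Set.finite_iUnion fun i => Set.finite_iUnion fun j => Set.finite_iUnion fun h =>
      finite_setOfPred_isRoot (sub_ne_zero.2 h)
  obtain ⟨x, hx, hxZ⟩ := (Set.Ioi_infinite 0).exists_notMem_finite hfin
  refine ⟨x, hx, fun i j h => ?_⟩
  have hP : P i = P j := by
    by_contra hne
    exact hxZ (Set.mem_iUnion₂.2 ⟨i, j, Set.mem_iUnion.2 ⟨hne, by simp [heval, h]⟩⟩)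
  ext k
  exact_mod_cast (hcoeff _ k).symm.trans ((congrArg (coeff · k) hP).trans (hcoeff _ k))

theorem Multiset.eq_of_map_eq_of_injOn {α β : Type*} {f : α → β} {S : Set α} (hf : S.InjOn f)
    {s t : Multiset α} (hs : ∀ a ∈ s, a ∈ S) (ht : ∀ a ∈ t, a ∈ S) (h : s.map f = t.map f) :
    s = t := by
  lift s to Multiset S using hs
  lift t to Multiset S using ht
  rw [Multiset.map_map, Multiset.map_map] at h
  exact congrArg _ (Multiset.map_injective hf.injective h)

def relCode {R : Type} {n : ℕ} (idx : R → ℕ) (p : Fin n × R) : ℕ := p.1 + n * (idx p.2 + 1)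

theorem relCode_injOn {R : Type} {n : ℕ} {idx : R → ℕ} {S : Set R} (h : S.InjOn idx) :
    {p : Fin n × R | p.2 ∈ S}.InjOn (relCode idx) := by
  rintro ⟨a, r⟩ hr ⟨b, r'⟩ hr' he
  have hn : 0 < n := a.pos
  simp only [relCode] at he
  have hmod := congrArg (· % n) he
  have hdiv := congrArg (· / n) he
  simp only [Nat.add_mul_mod_self_left, Nat.mod_eq_of_lt a.isLt, Nat.mod_eq_of_lt b.isLt,
    Nat.add_mul_div_left _ _ hn, Nat.div_eq_of_lt a.isLt, Nat.div_eq_of_lt b.isLt] at hmod hdiv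
  exact Prod.ext (Fin.ext hmod) (h hr hr' (by simpa using hdiv))

theorem cons_map_relCode_inj {R : Type} {n : ℕ} {idx : R → ℕ} {S : Set R} (hidx : S.InjOn idx)
    {a a' : Fin n} {M M' : Multiset (Fin n × R)} (hM : ∀ p ∈ M, p.2 ∈ S) (hM' : ∀ p ∈ M', p.2 ∈ S)
    (h : (a : ℕ) ::ₘ M.map (relCode idx) = (a' : ℕ) ::ₘ M'.map (relCode idx)) :
    a = a' ∧ M = M' := by
  have ha : (a : ℕ) = a' := by
    rcases Multiset.mem_cons.1 (h ▸ Multiset.mem_cons_self (a : ℕ) _) with ha | ha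
    · exact ha
    · obtain ⟨p, -, hp⟩ := Multiset.mem_map.1 ha
      have := a.isLt
      simp only [relCode] at hp
      nlinarith
  rw [ha, Multiset.cons_inj_right] at h
  exact ⟨Fin.ext ha, Multiset.eq_of_map_eq_of_injOn (relCode_injOn hidx) hM hM' h⟩

theorem exists_fin_ker_eq {V X : Type*} [Fintype V] {n : ℕ} (hn : Fintype.card V ≤ n)
    (g : V → X) : ∃ ρ : V → Fin n, ∀ u v, ρ u = ρ v ↔ g u = g v := by
  classical
  let S := Finset.univ.image g
  have hg : ∀ v, g v ∈ S := fun v => Finset.mem_image_of_mem g (Finset.mem_univ v)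
  refine ⟨fun v => Fin.castLE (Finset.card_image_le.trans hn) (S.equivFin ⟨g v, hg v⟩),
    fun u v => ?_⟩
  simp [Fin.castLE_inj]

def historyRec {β : Type*} (f : ℕ → ℕ) (hf : ∀ t, f t ≤ t) (x₀ : β) (step : β → β → β) :
    ℕ → β
  | 0 => x₀
  | t + 1 => step (historyRec f hf x₀ step (f t)) (historyRec f hf x₀ step t)
termination_by t => t
decreasing_by
  · exact Nat.lt_succ_of_le (hf t)
  · exact Nat.lt_succ_self t

theorem historyRec_zero {β : Type*} (f : ℕ → ℕ) (hf : ∀ t, f t ≤ t) (x₀ : β)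
    (step : β → β → β) : historyRec f hf x₀ step 0 = x₀ := by
  rw [historyRec]

theorem historyRec_succ {β : Type*} (f : ℕ → ℕ) (hf : ∀ t, f t ≤ t) (x₀ : β)
    (step : β → β → β) (t : ℕ) :
    historyRec f hf x₀ step (t + 1) =
      step (historyRec f hf x₀ step (f t)) (historyRec f hf x₀ step t) := by
  rw [historyRec]

noncomputable def signLayer {n : ℕ} (W : Matrix (Fin n) (Fin n) ℝ) (y : Fin n → ℝ) :
    Fin n → ℝ :=
  fun i => Real.sign ((W *ᵥ y) i - 1)

namespace KG

variable {V R D X Y : Type} [DecidableEq V] (G : KG V R D)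

theorem msgMS_comp (φ : X → Y) (g : V → X) (v : V) :
    G.msgMS (φ ∘ g) v = (G.msgMS g v).map (Prod.map φ id) := by
  simp [msgMS, Multiset.map_map]

theorem msgMS_eq_of_factorsThrough {g : V → X} {g' : V → Y} (h : g'.FactorsThrough g)
    {u v : V} (huv : G.msgMS g u = G.msgMS g v) : G.msgMS g' u = G.msgMS g' v := by
  have hg' : g' = Function.extend g g' (fun _ => g' u) ∘ g :=
    funext fun w => (h.extend_apply _ w).symm
  rw [hg', msgMS_comp, msgMS_comp, huv]

theorem msgMS_eq_iff_of_ker_eq {g : V → X} {g' : V → Y} (h : ∀ u v, g u = g v ↔ g' u = g' v)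
    (u v : V) : G.msgMS g u = G.msgMS g v ↔ G.msgMS g' u = G.msgMS g' v :=
  ⟨G.msgMS_eq_of_factorsThrough fun a b => (h a b).1,
    G.msgMS_eq_of_factorsThrough fun a b => (h a b).2⟩

theorem snd_mem_image_of_mem_msgMS {g : V → X} {v : V} {p : X × R} (hp : p ∈ G.msgMS g v) :
    p.2 ∈ Prod.fst '' (G.edges : Set (R × V × V)) := by
  obtain ⟨e, he, rfl⟩ := Multiset.mem_map.1 hp
  exact ⟨e, Multiset.mem_of_mem_filter he, rfl⟩

def neighborSum {n : ℕ} (α : R → ℝ) (h : V → Fin n → ℝ) (v : V) : Fin n → ℝ :=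
  ((G.msgMS h v).map fun p => α p.2 • p.1).sum

theorem exists_signLayer_eq_thermometer [Fintype V] {n : ℕ} (hn : Fintype.card V ≤ n)
    (ρa ρb : V → Fin n) :
    ∃ (W : Matrix (Fin n) (Fin n) ℝ) (α : R → ℝ) (ρ : V → Fin n),
      (∀ u v, ρ u = ρ v ↔ ρa u = ρa v ∧ G.msgMS ρb u = G.msgMS ρb v) ∧
      ∀ v, signLayer W (thermometer (ρa v) + G.neighborSum α (thermometer ∘ ρb) v) =
        thermometer (ρ v) := by
  obtain ⟨idx, hidx⟩ :=
    Set.countable_iff_exists_injOn.1 (G.edges.finite_toSet.image Prod.fst).countable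
  let code : V → Multiset ℕ := fun v => (ρa v : ℕ) ::ₘ (G.msgMS ρb v).map (relCode idx)
  obtain ⟨x, hx, hcode⟩ := exists_pos_sum_map_pow_injective code
  obtain ⟨c, hc⟩ := exists_dotProduct_thermometer_eq (n := n) fun a => x ^ (a : ℕ)
  let s : V → ℝ := fun v => ((code v).map (x ^ ·)).sum
  let α : R → ℝ := fun r => x ^ (n * (idx r + 1))
  have hscore : ∀ v, c ⬝ᵥ (thermometer (ρa v) + G.neighborSum α (thermometer ∘ ρb) v) = s v := by
    intro v
    have hdot : ∀ M : Multiset (Fin n × R), c ⬝ᵥ (M.map fun p => α p.2 • thermometer p.1).sum =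
        (M.map fun p => x ^ relCode idx p).sum := by
      intro M
      induction M using Multiset.induction_on with
      | empty => simp
      | cons p M ih => simp [dotProduct_add, ih, hc, α, relCode, pow_add, mul_comm]
    simp [neighborSum, msgMS_comp, Multiset.map_map, dotProduct_add, hc, s, code, hdot]
  have hs : ∀ v, 0 < s v := fun v => by
    simp only [s, code, Multiset.map_cons, Multiset.sum_cons]
    exact add_pos_of_pos_of_nonneg (pow_pos hx _)
      (Multiset.sum_nonneg fun y hy => by obtain ⟨k, -, rfl⟩ := Multiset.mem_map.1 hy; positivity)
  obtain ⟨ρ, μ, hρ, hsign⟩ := exists_sign_threshold_eq_thermometer hn s hs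
  refine ⟨vecMulVec μ c, α, ρ, fun u v => ?_, fun v => ?_⟩
  · rw [hρ]
    refine ⟨fun h => cons_map_relCode_inj hidx (fun p => G.snd_mem_image_of_mem_msgMS)
      (fun p => G.snd_mem_image_of_mem_msgMS) (hcode u v h), fun ⟨h₁, h₂⟩ => ?_⟩
    simp [s, code, h₁, h₂]
  · ext i
    rw [signLayer, vecMulVec_mulVec, hscore]
    simpa [mul_comm] using hsign v i

end KG

section

variable {V R D : Type} [DecidableEq V] (G : KG V R D) {f : ℕ → ℕ}

theorem rwl1_eq_of_le {s t : ℕ} (hst : s ≤ t) {u v : V} (h : rwl1 G t u = rwl1 G t v) :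
    rwl1 G s u = rwl1 G s v := by
  induction t, hst using Nat.le_induction with
  | base => exact h
  | succ t _ ih => exact ih (congrArg Prod.fst h)

theorem rwl1_succ_eq_iff {s t : ℕ} (hst : s ≤ t) {u v : V} :
    rwl1 G (t + 1) u = rwl1 G (t + 1) v ↔
      rwl1 G s u = rwl1 G s v ∧ G.msgMS (rwl1 G t) u = G.msgMS (rwl1 G t) v := by
  refine ⟨fun h => ⟨rwl1_eq_of_le G hst (congrArg Prod.fst h), congrArg Prod.snd h⟩,
    fun ⟨hs, hmsg⟩ => ?_⟩
  suffices ∀ k, s ≤ k → k ≤ t → rwl1 G k u = rwl1 G k v from Prod.ext (this t hst le_rfl) hmsg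
  intro k hsk
  induction k, hsk using Nat.le_induction with
  | base => exact fun _ => hs
  | succ k _ ih =>
    exact fun hkt => Prod.ext (ih (by omega))
      (G.msgMS_eq_of_factorsThrough (fun a b => rwl1_eq_of_le G (by omega)) hmsg)

theorem eq_iff_rwl1_eq_of_step (hf : ∀ t, f t ≤ t) {X : Type} (ρ : ℕ → V → X)
    (h₀ : ∀ u v, ρ 0 u = ρ 0 v ↔ G.color u = G.color v)
    (hstep : ∀ t u v, ρ (t + 1) u = ρ (t + 1) v ↔
      ρ (f t) u = ρ (f t) v ∧ G.msgMS (ρ t) u = G.msgMS (ρ t) v)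
    (t : ℕ) (u v : V) : ρ t u = ρ t v ↔ rwl1 G t u = rwl1 G t v := by
  induction t using Nat.strong_induction_on generalizing u v with
  | _ t ih =>
    cases t with
    | zero => exact h₀ u v
    | succ t =>
      rw [hstep, ih (f t) (Nat.lt_succ_of_le (hf t)),
        G.msgMS_eq_iff_of_ker_eq (ih t (Nat.lt_succ_self t)), rwl1_succ_eq_iff G (hf t)]

theorem signModel_succ (hf : ∀ t, f t ≤ t) {n : ℕ} (x : V → Fin n → ℝ)
    (W : ℕ → Matrix (Fin n) (Fin n) ℝ) (α : ℕ → R → ℝ) (t : ℕ) (v : V) :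
    signModel G f hf x W α (t + 1) v = signLayer (W t)
      (signModel G f hf x W α (f t) v + G.neighborSum (α t) (signModel G f hf x W α t) v) := by
  funext i
  rw [signModel]
  simp [signLayer, KG.neighborSum, KG.msgMS, mulVec, dotProduct, Multiset.map_map,
    Pi.multiset_sum_apply]

theorem signModel_eq_thermometer (hf : ∀ t, f t ≤ t) {n : ℕ} (ρ : ℕ → V → Fin n)
    (W : ℕ → Matrix (Fin n) (Fin n) ℝ) (α : ℕ → R → ℝ)
    (hstep : ∀ t v, signLayer (W t) (thermometer (ρ (f t) v) +
      G.neighborSum (α t) (thermometer ∘ ρ t) v) = thermometer (ρ (t + 1) v))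
    (t : ℕ) : signModel G f hf (thermometer ∘ ρ 0) W α t = thermometer ∘ ρ t := by
  induction t using Nat.strong_induction_on with
  | _ t ih =>
    cases t with
    | zero => rw [signModel]
    | succ t =>
      funext v
      rw [signModel_succ, ih (f t) (Nat.lt_succ_of_le (hf t)), ih t (Nat.lt_succ_self t)]
      exact hstep t v

end

theorem signModel_simulates_rwl1_general {V R D : Type} [Fintype V] [DecidableEq V]
    (G : KG V R D) (T : ℕ) (f : ℕ → ℕ) (hf : ∀ t, f t ≤ t) :
    ∃ (x : V → Fin (Fintype.card V) → ℝ)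
      (W : ℕ → Matrix (Fin (Fintype.card V)) (Fin (Fintype.card V)) ℝ)
      (α : ℕ → R → ℝ),
      (∀ u v : V, G.color u = G.color v ↔ x u = x v) ∧
      ∀ t ≤ T, ∀ u v : V,
        signModel G f hf x W α t u = signModel G f hf x W α t v ↔
          rwl1 G t u = rwl1 G t v := by
  obtain ⟨ρ₀, hρ₀⟩ := exists_fin_ker_eq le_rfl G.color
  choose W α next hnext hlayer using
    fun ρa ρb : V → Fin (Fintype.card V) => G.exists_signLayer_eq_thermometer le_rfl ρa ρb
  let ρ := historyRec f hf ρ₀ next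
  have hρ₀' : ρ 0 = ρ₀ := historyRec_zero f hf ρ₀ next
  have hρ : ∀ t, ρ (t + 1) = next (ρ (f t)) (ρ t) := historyRec_succ f hf ρ₀ next
  have hmodel := signModel_eq_thermometer G hf ρ (fun t => W (ρ (f t)) (ρ t))
    (fun t => α (ρ (f t)) (ρ t)) fun t v => by rw [hρ]; exact hlayer _ _ v
  have hker := eq_iff_rwl1_eq_of_step G hf ρ (by rw [hρ₀']; exact hρ₀)
    fun t u v => by rw [hρ]; exact hnext _ _ u v
  rw [hρ₀'] at hmodel
  refine ⟨thermometer ∘ ρ₀, fun t => W (ρ (f t)) (ρ t), fun t => α (ρ (f t)) (ρ t),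
    fun u v => ?_, fun t _ u v => ?_⟩
  · rw [Function.comp_apply, Function.comp_apply, thermometer_injective.eq_iff, hρ₀]
  · rw [hmodel, Function.comp_apply, Function.comp_apply, thermometer_injective.eq_iff, hker]

/-- For every knowledge graph `G` with `n = |V|`, every `T ≥ 0` and every
history function `f`, there are an initial feature map `x : V → ℝⁿ` with `c ≡ x`,
matrices `W^(t) ∈ ℝ^{n×n}` and scalars `α_r^(t)` such that the resulting sign-model
features satisfy `h^(t) ≡ rwl₁^(t)` for all `0 ≤ t ≤ T`. -/
theorem signModel_simulates_rwl1 {V R D : Type} [Fintype V] [DecidableEq V] [DecidableEq R]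
    (G : KG V R D) (T : ℕ) (f : ℕ → ℕ) (hf_mono : Monotone f) (hf : ∀ t, f t ≤ t) :
    ∃ (x : V → Fin (Fintype.card V) → ℝ)
      (W : ℕ → Matrix (Fin (Fintype.card V)) (Fin (Fintype.card V)) ℝ)
      (α : ℕ → R → ℝ),
      (∀ u v : V, G.color u = G.color v ↔ x u = x v) ∧
      ∀ t ≤ T, ∀ u v : V,
        signModel G f hf x W α t u = signModel G f hf x W α t v ↔
          rwl1 G t u = rwl1 G t v :=
  signModel_simulates_rwl1_general G T f hf
end

section
/- Let G=(V,E,R,c) be a knowledge graph and f a history function. Then for all t ≥ 0, the coloring rwl_{1,f}^{(t+1)} refines rwl_{1,f}^{(t)}; that is, for all u,v ∈ V, rwl_{1,f}^{(t+1)}(u) = rwl_{1,f}^{(t+1)}(v) implies rwl_{1,f}^{(t)}(u) = rwl_{1,f}^{(t)}(v). -/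
/-- Color type of the relational local 1-WL test with history function `f`:
`HColor D R f n s` is the type of the color after `s` rounds, computed with fuel `n`.
Since `f s ≤ s` for a history function, for `s ≤ n` the fuel is never exhausted, so
`HColor D R f t t` is the color type after `t` rounds. -/
def HColor (D R : Type) (f : ℕ → ℕ) : (n : ℕ) → ℕ → Type
  | 0 => fun _ => D
  | n + 1 => fun s =>
      match s with
      | 0 => D
      | s + 1 => HColor D R f n (f s) × Multiset (HColor D R f n s × R)

/-- The relational local 1-WL test with history function `f`, fuelled version:
`rwlH G f n s v` is the color of `v` after `s` rounds (computed with fuel `n`). -/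
def rwlH {V R D : Type} [DecidableEq V] (G : KG V R D) (f : ℕ → ℕ) :
    (n : ℕ) → (s : ℕ) → V → HColor D R f n s
  | 0 => fun _ => G.color
  | n + 1 => fun s =>
      match s with
      | 0 => G.color
      | s + 1 => fun v => (rwlH G f n (f s) v, G.msgMS (rwlH G f n s) v)

/-- The relational local 1-WL coloring with history function `f` after `t` rounds:
`rwlHist G f t v = rwl_{1,f}^(t)(v)`. -/
def rwlHist {V R D : Type} [DecidableEq V] (G : KG V R D) (f : ℕ → ℕ) (t : ℕ) :
    V → HColor D R f t t :=
  rwlH G f t t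

section Aux

variable {V R D : Type} [DecidableEq V]

private lemma heq_prod {A A' B B' : Type} (hA : A = A') (hB : B = B')
    {a : A} {a' : A'} {b : B} {b' : B'} (ha : HEq a a') (hb : HEq b b') :
    HEq ((a, b) : A × B) ((a', b') : A' × B') := by
  subst hA; subst hB
  rw [heq_iff_eq] at *
  subst ha; subst hb; rfl

private lemma msgMS_heq {X X' : Type} (G : KG V R D) (hX : X = X')
    {g : V → X} {g' : V → X'} (hg : ∀ w, HEq (g w) (g' w)) (v : V) :
    HEq (G.msgMS g v) (G.msgMS g' v) := by
  subst hX
  have : g = g' := funext fun w => heq_iff_eq.mp (hg w)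
  subst this; rfl

private lemma msgMS_comp {X Y : Type} (G : KG V R D) (g : V → X) (φ : X → Y) (v : V) :
    G.msgMS (fun w => φ (g w)) v = Multiset.map (fun p => (φ p.1, p.2)) (G.msgMS g v) := by
  simp [KG.msgMS, Multiset.map_map]

private lemma hcolor_congr (f : ℕ → ℕ) (hf_le : ∀ t, f t ≤ t) :
    ∀ s n m, s ≤ n → s ≤ m → HColor D R f n s = HColor D R f m s := by
  intro s
  induction s using Nat.strong_induction_on with
  | _ s IH =>
    intro n m hn hm
    match s, n, m with
    | 0, 0, 0 => rfl
    | 0, 0, m + 1 => rfl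
    | 0, n + 1, 0 => rfl
    | 0, n + 1, m + 1 => rfl
    | s + 1, n + 1, m + 1 =>
      show (HColor D R f n (f s) × Multiset (HColor D R f n s × R))
          = (HColor D R f m (f s) × Multiset (HColor D R f m s × R))
      rw [IH (f s) (Nat.lt_succ_of_le (hf_le s)) n m
            (le_trans (hf_le s) (Nat.le_of_succ_le_succ hn))
            (le_trans (hf_le s) (Nat.le_of_succ_le_succ hm)),
          IH s (Nat.lt_succ_self s) n m
            (Nat.le_of_succ_le_succ hn) (Nat.le_of_succ_le_succ hm)]

private lemma rwlH_congr (G : KG V R D) (f : ℕ → ℕ) (hf_le : ∀ t, f t ≤ t) :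
    ∀ s n m, s ≤ n → s ≤ m → ∀ v, HEq (rwlH G f n s v) (rwlH G f m s v) := by
  intro s
  induction s using Nat.strong_induction_on with
  | _ s IH =>
    intro n m hn hm v
    match s, n, m with
    | 0, 0, 0 => rfl
    | 0, 0, m + 1 => rfl
    | 0, n + 1, 0 => rfl
    | 0, n + 1, m + 1 => rfl
    | s + 1, n + 1, m + 1 =>
      show HEq ((rwlH G f n (f s) v, G.msgMS (rwlH G f n s) v) :
          HColor D R f n (f s) × Multiset (HColor D R f n s × R))
        ((rwlH G f m (f s) v, G.msgMS (rwlH G f m s) v) :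
          HColor D R f m (f s) × Multiset (HColor D R f m s × R))
      have hfs_n : f s ≤ n := le_trans (hf_le s) (Nat.le_of_succ_le_succ hn)
      have hfs_m : f s ≤ m := le_trans (hf_le s) (Nat.le_of_succ_le_succ hm)
      have hs_n : s ≤ n := Nat.le_of_succ_le_succ hn
      have hs_m : s ≤ m := Nat.le_of_succ_le_succ hm
      refine heq_prod (hcolor_congr f hf_le (f s) n m hfs_n hfs_m) ?_ ?_ ?_
      · rw [hcolor_congr f hf_le s n m hs_n hs_m]
      · exact IH (f s) (Nat.lt_succ_of_le (hf_le s)) n m hfs_n hfs_m v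
      · exact msgMS_heq G (hcolor_congr f hf_le s n m hs_n hs_m)
          (fun w => IH s (Nat.lt_succ_self s) n m hs_n hs_m w) v

private lemma refines (G : KG V R D) (f : ℕ → ℕ) (hf_mono : Monotone f)
    (hf_le : ∀ t, f t ≤ t) :
    ∀ t s, s ≤ t → ∃ φ : HColor D R f t t → HColor D R f s s,
      ∀ w, rwlH G f s s w = φ (rwlH G f t t w) := by
  intro t
  induction t using Nat.strong_induction_on with
  | _ t IH =>
    intro s hs
    rcases eq_or_lt_of_le hs with rfl | hlt
    · exact ⟨id, fun w => rfl⟩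
    obtain ⟨t', rfl⟩ : ∃ t', t = t' + 1 := ⟨t - 1, by omega⟩
    have hst' : s ≤ t' := by omega
    have core : ∃ φ₀ : HColor D R f (t' + 1) (t' + 1) → HColor D R f t' t',
        ∀ w, rwlH G f t' t' w = φ₀ (rwlH G f (t' + 1) (t' + 1) w) := by
      match t' with
      | 0 =>
        refine ⟨fun p => p.1, fun w => ?_⟩
        show G.color w = rwlH G f 0 (f 0) w
        rfl
      | s' + 1 =>
        have e1 : HColor D R f (s' + 1) (f (s' + 1))
            = HColor D R f (f (s' + 1)) (f (s' + 1)) :=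
          hcolor_congr f hf_le _ _ _ (hf_le _) le_rfl
        obtain ⟨ψ, hψ⟩ := IH (f (s' + 1)) (Nat.lt_succ_of_le (hf_le _)) (f s')
          (hf_mono (Nat.le_succ s'))
        have e2 : HColor D R f (f s') (f s') = HColor D R f s' (f s') :=
          hcolor_congr f hf_le _ _ _ le_rfl (hf_le _)
        obtain ⟨φ', hφ'⟩ := IH (s' + 1) (Nat.lt_succ_self _) s' (Nat.le_succ s')
        refine ⟨fun p => (cast e2 (ψ (cast e1 p.1)),
          Multiset.map (fun q => (φ' q.1, q.2)) p.2), fun w => ?_⟩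
        show (rwlH G f s' (f s') w, G.msgMS (rwlH G f s' s') w)
          = (cast e2 (ψ (cast e1 (rwlH G f (s' + 1) (f (s' + 1)) w))),
             Multiset.map (fun q => (φ' q.1, q.2)) (G.msgMS (rwlH G f (s' + 1) (s' + 1)) w))
        have c1 : cast e1 (rwlH G f (s' + 1) (f (s' + 1)) w)
            = rwlH G f (f (s' + 1)) (f (s' + 1)) w :=
          cast_eq_iff_heq.mpr (rwlH_congr G f hf_le _ _ _ (hf_le _) le_rfl w)
        have c2 : cast e2 (rwlH G f (f s') (f s') w) = rwlH G f s' (f s') w :=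
          cast_eq_iff_heq.mpr (rwlH_congr G f hf_le _ _ _ le_rfl (hf_le _) w)
        have hmsg : G.msgMS (rwlH G f s' s') w
            = Multiset.map (fun q => (φ' q.1, q.2))
                (G.msgMS (rwlH G f (s' + 1) (s' + 1)) w) := by
          have : G.msgMS (rwlH G f s' s') w
              = G.msgMS (fun w' => φ' (rwlH G f (s' + 1) (s' + 1) w')) w := by
            congr 1; funext w'; exact hφ' w'
          rw [this, msgMS_comp]
        rw [c1, ← hψ w, c2, hmsg]
    obtain ⟨φ₀, hφ₀⟩ := core
    obtain ⟨φ₁, hφ₁⟩ := IH t' (Nat.lt_succ_self t') s hst'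
    exact ⟨fun x => φ₁ (φ₀ x), fun w => by rw [hφ₁ w, hφ₀ w]⟩

end Aux

/-- For a knowledge graph `G` and a history function `f`, for all `t ≥ 0`
the coloring `rwl_{1,f}^(t+1)` refines `rwl_{1,f}^(t)`. -/
theorem rwlHist_succ_refines {V R D : Type} [DecidableEq V] [DecidableEq R]
    (G : KG V R D) (f : ℕ → ℕ) (hf_mono : Monotone f) (hf_le : ∀ t, f t ≤ t)
    (t : ℕ) (u v : V)
    (h : rwlHist G f (t + 1) u = rwlHist G f (t + 1) v) :
    rwlHist G f t u = rwlHist G f t v := by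
  obtain ⟨φ, hφ⟩ := refines G f hf_mono hf_le (t + 1) t (Nat.le_succ t)
  show rwlH G f t t u = rwlH G f t t v
  rw [hφ u, hφ v]
  exact congrArg φ h
end

section
/- Let G=(V,E,R,c) be a knowledge graph and let f, f' be history functions. Then for all t ≥ 0, the colorings rwl_{1,f}^{(t)} and rwl_{1,f'}^{(t)} are equivalent: for all u,v ∈ V, rwl_{1,f}^{(t)}(u) = rwl_{1,f}^{(t)}(v) if and only if rwl_{1,f'}^{(t)}(u) = rwl_{1,f'}^{(t)}(v). -/
section AuxHist

variable {V R D : Type} [DecidableEq V]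

/-- If coloring `g` refines `g'` (as partitions), message multisets under `g'` are
determined by those under `g`. -/
lemma msgMS_mono (G : KG V R D) {X X' : Type}
    (g : V → X) (g' : V → X') (h : ∀ w w', g w = g w' → g' w = g' w')
    {u v : V} (e : G.msgMS g u = G.msgMS g v) : G.msgMS g' u = G.msgMS g' v := by
  classical
  set φ : X → Option X' := fun c => if hc : ∃ w, g w = c then some (g' hc.choose) else none
    with hφdef
  have hφ : ∀ w, φ (g w) = some (g' w) := by
    intro w
    have hc : ∃ w', g w' = g w := ⟨w, rfl⟩
    simp only [hφdef, dif_pos hc]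
    exact congrArg some (h _ _ hc.choose_spec)
  have key : ∀ x : V, (G.msgMS g' x).map (Prod.map some id)
      = (G.msgMS g x).map (Prod.map φ id) := by
    intro x
    simp only [KG.msgMS, Multiset.map_map]
    apply Multiset.map_congr rfl
    intro a _
    simp [Prod.map, hφ]
  have hinj : Function.Injective (Prod.map (some : X' → Option X') (id : R → R)) := by
    intro a b hab
    obtain ⟨a1, a2⟩ := a; obtain ⟨b1, b2⟩ := b
    simpa [Prod.map, Prod.ext_iff] using hab
  apply Multiset.map_injective hinj
  rw [key, key, e]

/-- `rwl1` equality at round `t` implies equality at every earlier round. -/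
lemma rwl1_anti' (G : KG V R D) :
    ∀ t s, s ≤ t → ∀ u v : V, rwl1 G t u = rwl1 G t v → rwl1 G s u = rwl1 G s v := by
  intro t
  induction t with
  | zero =>
      intro s hs u v h
      have : s = 0 := Nat.le_zero.mp hs
      subst this; exact h
  | succ t ih =>
      intro s hs u v h
      rcases Nat.lt_or_ge s (t + 1) with hlt | hge
      · have h1 : rwl1 G t u = rwl1 G t v := congrArg Prod.fst h
        exact ih s (Nat.lt_succ_iff.mp hlt) u v h1
      · have : s = t + 1 := le_antisymm hs hge
        subst this; exact h

/-- Message multiset equality at round `t` propagates down to earlier rounds. -/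
lemma msg_anti (G : KG V R D) {t s : ℕ} (hs : s ≤ t) {u v : V}
    (h : G.msgMS (rwl1 G t) u = G.msgMS (rwl1 G t) v) :
    G.msgMS (rwl1 G s) u = G.msgMS (rwl1 G s) v :=
  msgMS_mono G (rwl1 G t) (rwl1 G s) (fun w w' hw => rwl1_anti' G t s hs w w' hw) h

/-- Initial color equality plus message equality at round `t` imply `rwl1` equality at
round `t + 1`. -/
lemma rwl1_of_color_msg (G : KG V R D) :
    ∀ t, ∀ u v : V, rwl1 G 0 u = rwl1 G 0 v →
      G.msgMS (rwl1 G t) u = G.msgMS (rwl1 G t) v → rwl1 G (t + 1) u = rwl1 G (t + 1) v := by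
  intro t
  induction t with
  | zero =>
      intro u v h0 hm
      show (rwl1 G 0 u, G.msgMS (rwl1 G 0) u) = (rwl1 G 0 v, G.msgMS (rwl1 G 0) v)
      rw [h0, hm]
  | succ t ih =>
      intro u v h0 hm
      have hmt : G.msgMS (rwl1 G t) u = G.msgMS (rwl1 G t) v :=
        msg_anti G (Nat.le_succ t) hm
      have ht1 : rwl1 G (t + 1) u = rwl1 G (t + 1) v := ih u v h0 hmt
      show (rwl1 G (t + 1) u, G.msgMS (rwl1 G (t + 1)) u)
          = (rwl1 G (t + 1) v, G.msgMS (rwl1 G (t + 1)) v)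
      rw [ht1, hm]

/-- Main lemma: with enough fuel, the fuelled history coloring induces the same
partition as `rwl1`. -/
lemma rwlH_iff_rwl1 (G : KG V R D) (f : ℕ → ℕ) (hf : ∀ t, f t ≤ t) :
    ∀ n s, s ≤ n → ∀ u v : V,
      (rwlH G f n s u = rwlH G f n s v ↔ rwl1 G s u = rwl1 G s v) := by
  intro n
  induction n with
  | zero =>
      intro s hs u v
      have : s = 0 := Nat.le_zero.mp hs
      subst this
      exact Iff.rfl
  | succ n ih =>
      intro s hs u v
      match s with
      | 0 => exact Iff.rfl
      | s + 1 =>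
        have hsn : s ≤ n := Nat.lt_succ_iff.mp hs
        have hfsn : f s ≤ n := le_trans (hf s) hsn
        constructor
        · intro h
          have h1 : rwlH G f n (f s) u = rwlH G f n (f s) v := congrArg Prod.fst h
          have h2 : G.msgMS (rwlH G f n s) u = G.msgMS (rwlH G f n s) v :=
            congrArg Prod.snd h
          have h1' : rwl1 G (f s) u = rwl1 G (f s) v := (ih (f s) hfsn u v).mp h1
          have h0 : rwl1 G 0 u = rwl1 G 0 v := rwl1_anti' G (f s) 0 (Nat.zero_le _) u v h1'
          have h2' : G.msgMS (rwl1 G s) u = G.msgMS (rwl1 G s) v :=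
            msgMS_mono G (rwlH G f n s) (rwl1 G s)
              (fun w w' hw => (ih s hsn w w').mp hw) h2
          exact rwl1_of_color_msg G s u v h0 h2'
        · intro h
          have h1 : rwl1 G s u = rwl1 G s v := congrArg Prod.fst h
          have h2 : G.msgMS (rwl1 G s) u = G.msgMS (rwl1 G s) v := congrArg Prod.snd h
          have hfs : rwl1 G (f s) u = rwl1 G (f s) v := rwl1_anti' G s (f s) (hf s) u v h1
          have h1' : rwlH G f n (f s) u = rwlH G f n (f s) v :=
            (ih (f s) hfsn u v).mpr hfs
          have h2' : G.msgMS (rwlH G f n s) u = G.msgMS (rwlH G f n s) v :=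
            msgMS_mono G (rwl1 G s) (rwlH G f n s)
              (fun w w' hw => (ih s hsn w w').mpr hw) h2
          show ((rwlH G f n (f s) u, G.msgMS (rwlH G f n s) u) :
              HColor D R f n (f s) × Multiset (HColor D R f n s × R))
            = (rwlH G f n (f s) v, G.msgMS (rwlH G f n s) v)
          rw [h1', h2']

end AuxHist

/-- For a knowledge graph `G` and history functions `f, f'`, for all
`t ≥ 0` the colorings `rwl_{1,f}^(t)` and `rwl_{1,f'}^(t)` are equivalent:
`rwl_{1,f}^(t)(u) = rwl_{1,f}^(t)(v)` iff `rwl_{1,f'}^(t)(u) = rwl_{1,f'}^(t)(v)`. -/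
theorem rwlHist_equiv_of_history {V R D : Type} [DecidableEq V] [DecidableEq R]
    (G : KG V R D) (f f' : ℕ → ℕ)
    (hf_mono : Monotone f) (hf_le : ∀ t, f t ≤ t)
    (hf'_mono : Monotone f') (hf'_le : ∀ t, f' t ≤ t)
    (t : ℕ) (u v : V) :
    rwlHist G f t u = rwlHist G f t v ↔ rwlHist G f' t u = rwlHist G f' t v := by
  rw [rwlHist, rwlHist, rwlH_iff_rwl1 G f hf_le t t le_rfl u v,
    rwlH_iff_rwl1 G f' hf'_le t t le_rfl u v]
end

section
/- Let G=(V,E,R,x,η) be a knowledge graph where x is a feature map and η is a pairwise coloring satisfying target node distinguishability, and let q ∈ R be a query relation. Then for every C-MPNN with T layers whose initialization δ satisfies δ(·,·,q) ≡ η, and for every 0 ≤ t ≤ T, the coloring rawl_2^{(t)} refines h_q^{(t)}: for all u,v,u',v' ∈ V, rawl_2^{(t)}(u,v) = rawl_2^{(t)}(u',v') implies h_q^{(t)}(u,v) = h_q^{(t)}(u',v'). -/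
lemma factor_through {α β γ : Type*} [Nonempty γ] (f : α → β) (g : α → γ)
    (h : ∀ a a', f a = f a' → g a = g a') : ∃ Φ : β → γ, ∀ a, Φ (f a) = g a := by
  classical
  refine ⟨fun b => if hb : ∃ a, f a = b then g hb.choose else Classical.arbitrary γ, fun a => ?_⟩
  have hb : ∃ a', f a' = f a := ⟨a, rfl⟩
  simp only [dif_pos hb]
  exact h _ _ hb.choose_spec

lemma rawl2_agree_of_le {V R D D₂ : Type} [DecidableEq V]
    (G : KG V R D) (η : V → V → D₂) {u v u' v' : V} :
    ∀ {t s : ℕ}, s ≤ t → rawl2 G η t u v = rawl2 G η t u' v' →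
      rawl2 G η s u v = rawl2 G η s u' v' := by
  intro t
  induction t with
  | zero => intro s hs h; obtain rfl := Nat.le_zero.mp hs; exact h
  | succ n ih =>
      intro s hs h
      rcases eq_or_lt_of_le hs with rfl | h'
      · exact h
      · exact ih (Nat.lt_succ_iff.mp h') (congrArg Prod.fst h)

lemma rawl2_refines_cmpnn_aux {V R D D₂ : Type} [DecidableEq V] [DecidableEq R]
    (G : KG V R D) (η : V → V → D₂)
    (q : R) (d : ℕ → ℕ) (N : CMPNN R d) (δ : V → V → R → Fin (d 0) → ℝ)
    (hδ : ∀ u v u' v' : V, δ u v q = δ u' v' q ↔ η u v = η u' v') :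
    ∀ t : ℕ, ∀ u v u' v' : V, rawl2 G η t u v = rawl2 G η t u' v' →
      N.h G q δ t u v = N.h G q δ t u' v' := by
  intro t
  induction t using Nat.strong_induction_on with
  | _ t ih =>
    match t, ih with
    | 0, _ =>
        intro u v u' v' h
        simp only [rawl2] at h
        simp only [CMPNN.h]
        exact (hδ u v u' v').mpr h
    | (n+1), ih =>
        intro u v u' v' h
        have h1 : rawl2 G η n u v = rawl2 G η n u' v' := congrArg Prod.fst h
        have h2 : G.msgMS (rawl2 G η n u) v = G.msgMS (rawl2 G η n u') v' :=
          congrArg Prod.snd h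
        have ihn : ∀ a b a' b' : V, rawl2 G η n a b = rawl2 G η n a' b' →
            N.h G q δ n a b = N.h G q δ n a' b' := fun a b a' b' =>
          ih n (Nat.lt_succ_self n) a b a' b'
        obtain ⟨Φ, hΦ⟩ := factor_through (γ := Fin (d n) → ℝ)
          (fun p : V × V => rawl2 G η n p.1 p.2) (fun p => N.h G q δ n p.1 p.2)
          (fun a a' hfa => ihn a.1 a.2 a'.1 a'.2 hfa)
        have key : ∀ a b : V,
            ((G.edges.val.filter (fun e => e.2.2 = b)).map
              (fun e => N.msg n e.1 (N.h G q δ n a e.2.1) q))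
            = (G.msgMS (rawl2 G η n a) b).map (fun c => N.msg n c.2 (Φ c.1) q) := by
          intro a b
          simp only [KG.msgMS, Multiset.map_map]
          refine Multiset.map_congr rfl (fun e _ => ?_)
          simp only [Function.comp]
          rw [hΦ (a, e.2.1)]
        have hf : N.h G q δ (N.f n) u v = N.h G q δ (N.f n) u' v' :=
          ih (N.f n) (Nat.lt_succ_of_le (N.f_le n)) u v u' v'
            (rawl2_agree_of_le G η (N.f_le n) h1)
        simp only [CMPNN.h]
        rw [hf, key u v, key u' v', h2]

/-- Let `G` be a knowledge graph with feature map (node coloring) and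
pairwise coloring `η` satisfying target node distinguishability, and let `q ∈ R`.
For every C-MPNN with `T` layers whose initialization `δ` satisfies `δ(·,·,q) ≡ η`,
and every `0 ≤ t ≤ T`, `rawl₂^(t)` refines `h_q^(t)`. -/
theorem rawl2_refines_cmpnn {V R D D₂ : Type} [DecidableEq V] [DecidableEq R]
    (G : KG V R D) (η : V → V → D₂)
    (hη : ∀ u v : V, u ≠ v → η u u ≠ η u v)
    (q : R) (d : ℕ → ℕ) (N : CMPNN R d) (δ : V → V → R → Fin (d 0) → ℝ)
    (hδ : ∀ u v u' v' : V, δ u v q = δ u' v' q ↔ η u v = η u' v')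
    (T : ℕ) (t : ℕ) (ht : t ≤ T) (u v u' v' : V)
    (h : rawl2 G η t u v = rawl2 G η t u' v') :
    N.h G q δ t u v = N.h G q δ t u' v' := by
  exact rawl2_refines_cmpnn_aux G η q d N δ hδ t u v u' v' h
end

section
/- Let G=(V,E,R,x,η) be a knowledge graph where x is a feature map and η is a pairwise coloring, and let q ∈ R be a query relation. For every C-MPNN 𝒜 with T layers over G, there exist an initial feature map y on the node set V×V of G² and an R-MPNN ℬ with T layers such that for all 0 ≤ t ≤ T and all u,v ∈ V, the feature h_{𝒜,G}^{(t)}(u,v) computed by 𝒜 on G equals the feature h_{ℬ,G²}^{(t)}((u,v)) computed by ℬ on G². -/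
/-- The facts of `G²` ending at `(u,v)` are exactly the facts of `G` ending at `v`,
with the source `u` carried along. -/
lemma sq_filter {V R D D₂ : Type} [Fintype V] [DecidableEq V] [DecidableEq R]
    (G : KG V R D) (η : V → V → D₂) (u v : V) :
    ((G.sq η).edges.val.filter (fun e => e.2.2 = (u, v))) =
    (G.edges.val.filter (fun e => e.2.2 = v)).map
      (fun e => (e.1, (u, e.2.1), (u, v))) := by
  refine (Multiset.Nodup.ext (Multiset.Nodup.filter _ (G.sq η).edges.nodup)
    (Multiset.Nodup.map_on ?_ (Multiset.Nodup.filter _ G.edges.nodup))).mpr ?_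
  · intro e he e' he' h
    simp only [Multiset.mem_filter] at he he'
    obtain ⟨r, w, z⟩ := e
    obtain ⟨r', w', z'⟩ := e'
    simp only [Prod.mk.injEq] at h ⊢
    exact ⟨h.1, h.2.1.2, he.2.trans he'.2.symm⟩
  · intro x
    simp only [Multiset.mem_filter, Multiset.mem_map, KG.sq, Finset.mem_val,
      Finset.mem_image, Finset.mem_product, Finset.mem_univ, true_and]
    constructor
    · rintro ⟨⟨⟨a, e⟩, he, rfl⟩, hend⟩
      simp only [Prod.mk.injEq] at hend
      refine ⟨e, ⟨he, hend.2⟩, ?_⟩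
      simp [hend.1, hend.2]
    · rintro ⟨e, ⟨he, hv⟩, rfl⟩
      exact ⟨⟨(u, e), he, by simp [hv]⟩, rfl⟩

/-- For every C-MPNN `𝒜` with `T` layers over `G` (with pairwise coloring
`η` and query `q`), there are an initial feature map `y` on the node set `V×V` of `G²`
and an R-MPNN `ℬ` with `T` layers such that for all `0 ≤ t ≤ T` and all `u,v ∈ V`,
`h_{𝒜,G}^(t)(u,v) = h_{ℬ,G²}^(t)((u,v))`. -/
theorem cmpnn_to_rmpnn_on_sq {V R D D₂ : Type} [Fintype V] [DecidableEq V] [DecidableEq R]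
    (G : KG V R D) (η : V → V → D₂) (q : R)
    (d : ℕ → ℕ) (A : CMPNN R d) (δ : V → V → R → Fin (d 0) → ℝ) (T : ℕ) :
    ∃ (B : RMPNN R d) (y : V × V → Fin (d 0) → ℝ),
      ∀ t ≤ T, ∀ u v : V,
        A.h G q δ t u v = B.h (G.sq η) y t (u, v) := by
  classical
  -- build B by freezing the query relation in the message functions
  refine ⟨{ f := A.f, f_mono := A.f_mono, f_le := A.f_le, M := A.M, A := A.A,
            msg := fun t r h => A.msg t r h q, agg := A.agg, upd := A.upd },
          fun p => δ p.1 p.2 q, ?_⟩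
  set B : RMPNN R d := ({ f := A.f, f_mono := A.f_mono, f_le := A.f_le, M := A.M, A := A.A, msg := fun t r h => A.msg t r h q, agg := A.agg, upd := A.upd } : RMPNN R d) with hB
  have key : ∀ t, ∀ u v : V,
      A.h G q δ t u v = B.h (G.sq η) (fun p => δ p.1 p.2 q) t (u, v) := by
    intro t
    induction t using Nat.strong_induction_on with
    | _ t ih =>
      match t with
      | 0 => intro u v; simp only [CMPNN.h, RMPNN.h]
      | Nat.succ t =>
        intro u v
        simp only [CMPNN.h, RMPNN.h]
        have hf : A.f t < t + 1 := Nat.lt_succ_of_le (A.f_le t)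
        rw [ih (A.f t) hf u v, sq_filter, Multiset.map_map]
        have hmsg : (fun e : R × V × V => A.msg t e.1 (A.h G q δ t u e.2.1) q) =
            fun e : R × V × V =>
              A.msg t e.1 (B.h (G.sq η) (fun p => δ p.1 p.2 q) t (u, e.2.1)) q :=
          funext fun e => by rw [ih t (Nat.lt_succ_self t) u e.2.1]
        rw [hmsg]
        rfl
  exact fun t _ u v => key t u v
end

section
/- Let G=(V,E,R,x,η) be a knowledge graph where x is a feature map and η is a pairwise coloring, and let q ∈ R be a query relation. For every initial feature map y on the node set V×V of G² satisfying target node distinguishability (i.e., y((u,u)) ≠ y((u,v)) for all u ≠ v) and every R-MPNN ℬ with T layers, there exists a C-MPNN 𝒜 with T layers over G such that for all 0 ≤ t ≤ T and all u,v ∈ V, the feature h_{𝒜,G}^{(t)}(u,v) computed by 𝒜 on G equals the feature h_{ℬ,G²}^{(t)}((u,v)) computed by ℬ on G² with initial features y. -/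
/-- For every initial feature map `y` on the node set `V×V` of `G²`
satisfying target node distinguishability and every R-MPNN `ℬ` with `T` layers, there is
a C-MPNN `𝒜` with `T` layers over `G` such that for all `0 ≤ t ≤ T` and all `u,v ∈ V`,
`h_{𝒜,G}^(t)(u,v) = h_{ℬ,G²}^(t)((u,v))`. -/
theorem rmpnn_on_sq_to_cmpnn {V R D D₂ : Type} [Fintype V] [DecidableEq V] [DecidableEq R]
    (G : KG V R D) (η : V → V → D₂) (q : R) (d : ℕ → ℕ)
    (y : V × V → Fin (d 0) → ℝ)
    (hy : ∀ u v : V, u ≠ v → y (u, u) ≠ y (u, v))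
    (B : RMPNN R d) (T : ℕ) :
    ∃ (A : CMPNN R d) (δ : V → V → R → Fin (d 0) → ℝ),
      ∀ t ≤ T, ∀ u v : V,
        A.h G q δ t u v = B.h (G.sq η) y t (u, v) := by
  refine ⟨⟨B.f, B.f_mono, B.f_le, B.M, B.A, fun t r x _ => B.msg t r x, B.agg, B.upd⟩,
    fun u v _ => y (u, v), ?_⟩
  have key : ∀ u v : V, ((G.sq η).edges.val.filter (fun e => e.2.2 = (u, v))) =
      (G.edges.val.filter (fun e => e.2.2 = v)).map
        (fun e => (e.1, (u, e.2.1), (u, v))) := by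
    intro u v
    have hnd : ((G.edges.val.filter (fun e => e.2.2 = v)).map
        (fun e : R × V × V => (e.1, (u, e.2.1), (u, v)))).Nodup := by
      refine Multiset.Nodup.map_on ?_ (Multiset.Nodup.filter _ G.edges.nodup)
      intro e1 h1 e2 h2 heq
      have hv1 : e1.2.2 = v := (Multiset.mem_filter.mp h1).2
      have hv2 : e2.2.2 = v := (Multiset.mem_filter.mp h2).2
      simp only [Prod.mk.injEq, true_and, and_true] at heq
      exact Prod.ext heq.1 (Prod.ext heq.2 (hv1.trans hv2.symm))
    refine Multiset.Nodup.ext (Multiset.Nodup.filter _ (G.sq η).edges.nodup) hnd |>.mpr ?_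
    intro x
    simp only [Multiset.mem_filter, Multiset.mem_map, KG.sq, Finset.mem_val,
      Finset.mem_image, Finset.mem_product, Finset.mem_univ, true_and]
    constructor
    · rintro ⟨⟨p, hp, rfl⟩, hx⟩
      rw [Prod.ext_iff] at hx
      refine ⟨p.2, ⟨hp, hx.2⟩, ?_⟩
      exact Prod.ext rfl (Prod.ext (Prod.ext hx.1.symm rfl) (Prod.ext hx.1.symm hx.2.symm))
    · rintro ⟨e, ⟨he1, he2⟩, rfl⟩
      exact ⟨⟨(u, e), he1, by simp [he2]⟩, rfl⟩
  have main : ∀ t, ∀ u v : V,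
      CMPNN.h ⟨B.f, B.f_mono, B.f_le, B.M, B.A, fun t r x _ => B.msg t r x, B.agg, B.upd⟩
        G q (fun u v _ => y (u, v)) t u v = B.h (G.sq η) y t (u, v) := by
    intro t
    induction t using Nat.strong_induction_on with
    | _ t ih =>
      match t with
      | 0 =>
        intro u v
        rw [CMPNN.h, RMPNN.h]
      | Nat.succ t =>
        intro u v
        rw [CMPNN.h, RMPNN.h]
        dsimp only
        have hms : (Multiset.map (fun e => B.msg t e.1 (B.h (G.sq η) y t e.2.1))
              (Multiset.filter (fun e => e.2.2 = (u, v)) (G.sq η).edges.val)) =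
            Multiset.map (fun e => B.msg t e.1 (B.h (G.sq η) y t (u, e.2.1)))
              (Multiset.filter (fun e => e.2.2 = v) G.edges.val) := by
          rw [key u v, Multiset.map_map]
          rfl
        rw [hms, ih (B.f t) (Nat.lt_succ_of_le (B.f_le t))]
        refine congrArg _ (congrArg _ (Multiset.map_congr rfl ?_))
        intro e _
        simp [ih t (Nat.lt_succ_self t)]
  exact fun t _ u v => main t u v
end

section
/- Let G=(V,E,R,c,η) be a knowledge graph where η is a pairwise coloring. Then for all t ≥ 0 and all u,v ∈ V, the relational asymmetric local 2-WL color rawl_2^{(t)}(u,v) computed over G coincides with the relational local 1-WL color rwl_1^{(t)}((u,v)) computed over G² = (V×V, E', R, c_η). -/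
theorem msg_sq {V R D D₂ X : Type} [Fintype V] [DecidableEq V] [DecidableEq R]
    (G : KG V R D) (η : V → V → D₂) (g : V × V → X) (u v : V) :
    (G.sq η).msgMS g (u, v) = G.msgMS (fun w => g (u, w)) v := by
  simp only [KG.msgMS]
  rw [← Finset.filter_val, ← Finset.filter_val]
  have h : ((G.sq η).edges.filter (fun e => e.2.2 = (u, v))) =
      (G.edges.filter (fun e => e.2.2 = v)).image
        (fun e => (e.1, (u, e.2.1), (u, v))) := by
    ext ⟨r, ⟨a, b⟩, ⟨c, d⟩⟩
    simp only [KG.sq, Finset.mem_filter, Finset.mem_image, Finset.mem_product,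
      Finset.mem_univ, true_and, Prod.mk.injEq, Prod.exists]
    constructor
    · rintro ⟨⟨p, r', w, x, hmem, hr, ⟨hp1, hw⟩, hp2, hx⟩, hc, hd⟩
      subst hr hp1 hw hx hc hd
      subst hp2
      exact ⟨r', w, x, ⟨hmem, rfl⟩, rfl, ⟨rfl, rfl⟩, rfl, rfl⟩
    · rintro ⟨r', w, x, ⟨hmem, hx⟩, hr, ⟨ha, hb⟩, hc, hd⟩
      subst hr ha hb hc hd hx
      exact ⟨⟨u, r', w, x, hmem, rfl, ⟨rfl, rfl⟩, rfl, rfl⟩, rfl, rfl⟩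
  rw [h, Finset.image_val_of_injOn, Multiset.map_map]
  · rfl
  · rintro ⟨r, w, x⟩ hm ⟨r', w', x'⟩ hm' he
    simp_all [Prod.ext_iff]

/-- For a knowledge graph `G` with pairwise coloring `η`, for all `t ≥ 0`
and all `u,v ∈ V`, the color `rawl₂^(t)(u,v)` computed over `G` coincides with the color
`rwl₁^(t)((u,v))` computed over `G² = (V×V, E', R, c_η)`. -/
theorem rawl2_eq_rwl1_sq {V R D D₂ : Type} [Fintype V] [DecidableEq V] [DecidableEq R]
    (G : KG V R D) (η : V → V → D₂) (t : ℕ) (u v : V) :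
    rawl2 G η t u v = rwl1 (G.sq η) t (u, v) := by
  induction t generalizing v with
  | zero => rfl
  | succ t ih =>
    have hfun : rawl2 G η t u = fun w => rwl1 (G.sq η) t (u, w) := funext fun w => ih w
    show (rawl2 G η t u v, G.msgMS (rawl2 G η t u) v)
        = (rwl1 (G.sq η) t (u, v), (G.sq η).msgMS (rwl1 (G.sq η) t) (u, v))
    rw [ih v, hfun, msg_sq]
end

section
/- For all t ≥ 0 and all knowledge graphs G=(V,E,R,c,η) with pairwise coloring η, the augmented relational asymmetric local 2-WL coloring refines the unaugmented one: for all u,v,u',v' ∈ V, rawl_2⁺^{(t)}(G,u,v) = rawl_2⁺^{(t)}(G,u',v') implies rawl_2^{(t)}(G,u,v) = rawl_2^{(t)}(G,u',v'). -/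
/-- Forget the augmented structure of a `Color1` over `R ⊕ R`. -/
def phi (D₂ R : Type) : (t : ℕ) → Color1 D₂ (R ⊕ R) t → Color1 D₂ R t
  | 0, x => x
  | t + 1, x =>
      (phi D₂ R t x.1,
        x.2.filterMap (fun p => Sum.elim (fun r => some (phi D₂ R t p.1, r)) (fun _ => none) p.2))

lemma aug_edges_val {V R D : Type} [DecidableEq V] [DecidableEq R] (G : KG V R D) :
    G.aug.edges.val =
      G.edges.val.map (fun e => ((Sum.inl e.1 : R ⊕ R), e.2)) +
      (G.edges.val.filter (fun e => e.2.1 ≠ e.2.2)).map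
        (fun e => ((Sum.inr e.1 : R ⊕ R), e.2.2, e.2.1)) := by
  have hdisj : Disjoint (G.edges.image (fun e => ((Sum.inl e.1 : R ⊕ R), e.2)))
      ((G.edges.filter (fun e => e.2.1 ≠ e.2.2)).image
        (fun e => ((Sum.inr e.1 : R ⊕ R), e.2.2, e.2.1))) := by
    rw [Finset.disjoint_left]
    rintro ⟨r, a, b⟩ h1 h2
    simp only [Finset.mem_image] at h1 h2
    obtain ⟨e1, -, he1⟩ := h1
    obtain ⟨e2, -, he2⟩ := h2
    rw [← he2] at he1
    exact Sum.inl_ne_inr (congrArg Prod.fst he1)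
  have h1 : (G.edges.image (fun e => ((Sum.inl e.1 : R ⊕ R), e.2))).val =
      G.edges.val.map (fun e => ((Sum.inl e.1 : R ⊕ R), e.2)) := by
    rw [Finset.image_val, Multiset.dedup_eq_self]
    exact G.edges.nodup.map (fun a b h => by
      have := congrArg Prod.fst h
      have := congrArg Prod.snd h
      aesop)
  have h2 : ((G.edges.filter (fun e => e.2.1 ≠ e.2.2)).image
        (fun e => ((Sum.inr e.1 : R ⊕ R), e.2.2, e.2.1))).val =
      (G.edges.val.filter (fun e => e.2.1 ≠ e.2.2)).map
        (fun e => ((Sum.inr e.1 : R ⊕ R), e.2.2, e.2.1)) := by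
    rw [Finset.image_val, Finset.filter_val, Multiset.dedup_eq_self]
    exact (G.edges.nodup.filter _).map (fun a b h => by
      have h1 := congrArg Prod.fst h
      have h2 := congrArg Prod.snd h
      aesop)
  show ((G.edges.image _) ∪ _).val = _
  rw [← Finset.disjUnion_eq_union _ _ hdisj]
  show _ + _ = _
  rw [h1, h2]

lemma Multiset.filterMap_add' {α β : Type*} (f : α → Option β) (s t : Multiset α) :
    (s + t).filterMap f = s.filterMap f + t.filterMap f := by
  induction s using Multiset.induction with
  | empty => simp
  | cons a s ih =>
      rw [Multiset.cons_add]
      cases h : f a with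
      | none =>
          rw [Multiset.filterMap_cons_none _ _ h, Multiset.filterMap_cons_none _ _ h, ih]
      | some b =>
          rw [Multiset.filterMap_cons_some _ _ _ h, Multiset.filterMap_cons_some _ _ _ h, ih,
            Multiset.cons_add]

lemma Multiset.filterMap_none' {α β : Type*} (s : Multiset α) :
    s.filterMap (fun _ => (none : Option β)) = 0 := by
  induction s using Multiset.induction with
  | empty => simp
  | cons a s ih => rw [Multiset.filterMap_cons_none _ _ rfl, ih]

lemma msg_aug {V R D X Y : Type} [DecidableEq V] [DecidableEq R] (G : KG V R D)
    (ψ : X → Y) (g : V → X) (v : V) :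
    (G.aug.msgMS g v).filterMap
        (fun p => Sum.elim (fun r => some (ψ p.1, r)) (fun _ => none) p.2) =
      G.msgMS (fun w => ψ (g w)) v := by
  unfold KG.msgMS
  rw [aug_edges_val, Multiset.filter_add, Multiset.map_add, Multiset.filterMap_add']
  rw [Multiset.filter_map, Multiset.filter_map, Multiset.map_map, Multiset.map_map,
    Multiset.filterMap_map, Multiset.filterMap_map]
  have e1 : (Multiset.filterMap
      ((fun p : X × (R ⊕ R) => Sum.elim (fun r => some (ψ p.1, r)) (fun _ => none) p.2) ∘
        ((fun e : (R ⊕ R) × V × V => (g e.2.1, e.1)) ∘ (fun e : R × V × V => ((Sum.inl e.1 : R ⊕ R), e.2))))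
      (Multiset.filter ((fun e : (R ⊕ R) × V × V => e.2.2 = v) ∘ (fun e : R × V × V => ((Sum.inl e.1 : R ⊕ R), e.2))) G.edges.val)) =
      Multiset.map (fun e : R × V × V => (ψ (g e.2.1), e.1))
        (Multiset.filter (fun e : R × V × V => e.2.2 = v) G.edges.val) := by
    show Multiset.filterMap (some ∘ (fun e : R × V × V => (ψ (g e.2.1), e.1))) _ = _
    rw [Multiset.filterMap_eq_map]
    congr 1
  have e2 : (Multiset.filterMap
      ((fun p : X × (R ⊕ R) => Sum.elim (fun r => some (ψ p.1, r)) (fun _ => none) p.2) ∘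
        ((fun e : (R ⊕ R) × V × V => (g e.2.1, e.1)) ∘ (fun e : R × V × V => ((Sum.inr e.1 : R ⊕ R), e.2.2, e.2.1))))
      (Multiset.filter ((fun e : (R ⊕ R) × V × V => e.2.2 = v) ∘ (fun e : R × V × V => ((Sum.inr e.1 : R ⊕ R), e.2.2, e.2.1)))
        (Multiset.filter (fun e : R × V × V => e.2.1 ≠ e.2.2) G.edges.val))) = 0 := by
    rw [show ((fun p : X × (R ⊕ R) => Sum.elim (fun r => some (ψ p.1, r)) (fun _ => none) p.2) ∘
        ((fun e : (R ⊕ R) × V × V => (g e.2.1, e.1)) ∘ (fun e : R × V × V => ((Sum.inr e.1 : R ⊕ R), e.2.2, e.2.1)))) =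
        (fun _ : R × V × V => (none : Option (Y × R))) from rfl]
    rw [Multiset.filterMap_none']
  rw [e1, e2, add_zero]

lemma phi_rawl2 {V R D D₂ : Type} [DecidableEq V] [DecidableEq R]
    (G : KG V R D) (η : V → V → D₂) :
    ∀ (t : ℕ) (u v : V), phi D₂ R t (rawl2 G.aug η t u v) = rawl2 G η t u v := by
  intro t
  induction t with
  | zero => intro u v; rfl
  | succ t ih =>
      intro u v
      show (phi D₂ R t (rawl2 G.aug η t u v),
          (G.aug.msgMS (rawl2 G.aug η t u) v).filterMap
            (fun p => Sum.elim (fun r => some (phi D₂ R t p.1, r)) (fun _ => none) p.2)) =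
        (rawl2 G η t u v, G.msgMS (rawl2 G η t u) v)
      rw [Prod.mk.injEq]
      refine ⟨ih u v, ?_⟩
      rw [msg_aug]
      unfold KG.msgMS
      congr 1
      funext e
      show (phi D₂ R t (rawl2 G.aug η t u e.2.1), e.1) = _
      rw [ih]

/-- For all `t ≥ 0` and all knowledge graphs `G` with pairwise coloring
`η`, the augmented test `rawl₂⁺^(t)(G,·,·) = rawl₂^(t)(G⁺,·,·)` refines `rawl₂^(t)(G,·,·)`. -/
theorem rawl2plus_refines_rawl2 {V R D D₂ : Type} [DecidableEq V] [DecidableEq R]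
    (G : KG V R D) (η : V → V → D₂) (t : ℕ) (u v u' v' : V)
    (h : rawl2 G.aug η t u v = rawl2 G.aug η t u' v') :
    rawl2 G η t u v = rawl2 G η t u' v' := by
  rw [← phi_rawl2 G η t u v, ← phi_rawl2 G η t u' v', h]
end

section
/- There exist a knowledge graph G=(V,E,R,c,η) with pairwise coloring η and nodes u,v,u',v' ∈ V such that rawl_2⁺^{(1)}(G,u,v) ≠ rawl_2⁺^{(1)}(G,u',v') but rawl_2^{(t)}(G,u,v) = rawl_2^{(t)}(G,u',v') for all t ≥ 0. (Concretely, one may take V = {u, v, v'}, R = {r₁, r₂}, E = {r₁(v,u), r₂(v',u)}, and η with η(u,v) = η(u,v'), comparing the pairs (u,v) and (u,v').) -/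
/-- There are a knowledge graph `G` with pairwise coloring `η` and nodes
`u,v,u',v'` such that `rawl₂⁺^(1)(G,u,v) ≠ rawl₂⁺^(1)(G,u',v')` while
`rawl₂^(t)(G,u,v) = rawl₂^(t)(G,u',v')` for all `t ≥ 0`. -/
theorem rawl2plus_strictly_finer : ∃ (V R D D₂ : Type) (iV : DecidableEq V)
    (iR : DecidableEq R) (G : KG V R D) (η : V → V → D₂) (u v u' v' : V),
    (∀ t : ℕ, @rawl2 V R D D₂ iV G η t u v = @rawl2 V R D D₂ iV G η t u' v') ∧
    @rawl2 V (R ⊕ R) D D₂ iV (@KG.aug V R D iV iR G) η 1 u v ≠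
      @rawl2 V (R ⊕ R) D D₂ iV (@KG.aug V R D iV iR G) η 1 u' v' := by
  refine ⟨Fin 3, Fin 2, Unit, Unit, inferInstance, inferInstance,
    ⟨{(0, 1, 0), (1, 2, 0)}, fun _ => ()⟩, fun _ _ => (), 0, 1, 0, 2, ?_, ?_⟩
  · intro t
    induction t with
    | zero => rfl
    | succ t ih =>
      simp only [rawl2, ih]
      congr 1
  · intro h
    have h2 : ({((), Sum.inr (0 : Fin 2))} : Multiset (Unit × (Fin 2 ⊕ Fin 2))) =
        {((), Sum.inr (1 : Fin 2))} := congrArg Prod.snd h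
    simp at h2
end

section
/- Let G=(V,E,R,c,η) be a knowledge graph with pairwise coloring η, so that rwl_2^{(0)}(G) ≡ rawl_2^{(0)}(G) (both initial colorings are η). Then for every t > 0, the relational symmetric local 2-WL coloring refines the asymmetric one: for all u,v,u',v' ∈ V, rwl_2^{(t)}(u,v) = rwl_2^{(t)}(u',v') implies rawl_2^{(t)}(u,v) = rawl_2^{(t)}(u',v'). -/
/-- Extract the asymmetric color from the symmetric one. -/
def c2toc1 (D R : Type) : (t : ℕ) → Color2 D R t → Color1 D R t
  | 0, c => c
  | t + 1, c => (c2toc1 D R t c.1, c.2.2.map (Prod.map (c2toc1 D R t) id))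

lemma c2toc1_rwl2 {V R D D₂ : Type} [DecidableEq V]
    (G : KG V R D) (η : V → V → D₂) : ∀ (t : ℕ) (u v : V),
    c2toc1 D₂ R t (rwl2 G η t u v) = rawl2 G η t u v := by
  intro t
  induction t with
  | zero => intro u v; rfl
  | succ t ih =>
    intro u v
    simp only [rwl2, rawl2, c2toc1, ih, KG.msgMS, Multiset.map_map]
    congr 1
    exact Multiset.map_congr rfl (fun e _ => by simp [Prod.map, ih])

/-- For a knowledge graph `G` with pairwise coloring `η` (so the initial
colorings of `rwl₂` and `rawl₂` are both `η`), for every `t > 0` the symmetric test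
refines the asymmetric one: `rwl₂^(t)(u,v) = rwl₂^(t)(u',v')` implies
`rawl₂^(t)(u,v) = rawl₂^(t)(u',v')`. -/
theorem rwl2_refines_rawl2 {V R D D₂ : Type} [DecidableEq V] [DecidableEq R]
    (G : KG V R D) (η : V → V → D₂) (t : ℕ) (ht : 0 < t) (u v u' v' : V)
    (h : rwl2 G η t u v = rwl2 G η t u' v') :
    rawl2 G η t u v = rawl2 G η t u' v' := by
  rw [← c2toc1_rwl2, ← c2toc1_rwl2, h]
end

section
/- There exist a knowledge graph G=(V,E,R,c,η) with pairwise coloring η and pairs of nodes (u,v) and (u',v') such that rawl_2^{(t)}(G,u,v) = rawl_2^{(t)}(G,u',v') for all t ≥ 0 but rwl_2^{(1)}(G,u,v) ≠ rwl_2^{(1)}(G,u',v'). (Concretely, one may take V = {u, u', v, x}, R = {r}, E = {r(x,u')}, and η with η(u,v) = η(u',v), comparing the pairs (u,v) and (u',v).) -/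
/-- There are a knowledge graph `G` with pairwise coloring `η` and pairs
`(u,v)`, `(u',v')` such that `rawl₂^(t)(G,u,v) = rawl₂^(t)(G,u',v')` for all `t ≥ 0` but
`rwl₂^(1)(G,u,v) ≠ rwl₂^(1)(G,u',v')`. -/
theorem rwl2_strictly_finer_than_rawl2 : ∃ (V R D D₂ : Type) (iV : DecidableEq V)
    (G : KG V R D) (η : V → V → D₂) (u v u' v' : V),
    (∀ t : ℕ, @rawl2 V R D D₂ iV G η t u v = @rawl2 V R D D₂ iV G η t u' v') ∧
    @rwl2 V R D D₂ iV G η 1 u v ≠ @rwl2 V R D D₂ iV G η 1 u' v' := by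
  refine ⟨Fin 4, Unit, Unit, Unit, inferInstance,
    ⟨{((), (3 : Fin 4), (1 : Fin 4))}, fun _ => ()⟩, fun _ _ => (), 0, 2, 1, 2, ?_, ?_⟩
  · intro t
    have hf : Multiset.filter (fun e : Unit × Fin 4 × Fin 4 => e.2.2 = (2 : Fin 4))
        ({((), (3 : Fin 4), (1 : Fin 4))} : Finset (Unit × Fin 4 × Fin 4)).val = 0 := by
      decide
    induction t with
    | zero => rfl
    | succ t ih =>
      show (_, _) = (_, _)
      rw [ih]
      unfold KG.msgMS
      rw [hf]
      simp
  · intro h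
    have h2 := congrArg (fun p : Color2 Unit Unit 1 => p.2.1) h
    simp only [rwl2, KG.msgMS] at h2
    have e0 : Multiset.filter (fun e : Unit × Fin 4 × Fin 4 => e.2.2 = (0 : Fin 4))
        ({((), (3 : Fin 4), (1 : Fin 4))} : Finset (Unit × Fin 4 × Fin 4)).val = 0 := by
      decide
    have e1 : Multiset.filter (fun e : Unit × Fin 4 × Fin 4 => e.2.2 = (1 : Fin 4))
        ({((), (3 : Fin 4), (1 : Fin 4))} : Finset (Unit × Fin 4 × Fin 4)).val
        = {((), (3 : Fin 4), (1 : Fin 4))} := by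
      decide
    rw [e0, e1] at h2
    have := congrArg Multiset.card h2
    simp at this
end

section
/- The tests rwl_2 and rawl_2⁺ are incomparable in distinguishing power. Specifically: (1) there exist a knowledge graph G with pairwise coloring η and pairs (u,v), (u',v') such that rwl_2^{(t)}(G,u,v) = rwl_2^{(t)}(G,u',v') for all t ≥ 0 but rawl_2⁺^{(1)}(G,u,v) ≠ rawl_2⁺^{(1)}(G,u',v'); and (2) there exist a knowledge graph G' with pairwise coloring η' and pairs (u,v), (u',v') such that rawl_2⁺^{(t)}(G',u,v) = rawl_2⁺^{(t)}(G',u',v') for all t ≥ 0 but rwl_2^{(1)}(G',u,v) ≠ rwl_2^{(1)}(G',u',v'). -/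
/-! Both examples live on the graph with one fact `r(0,1)` and an isolated node `2`, with constant
`η`. A node without in-neighbours sends only empty multisets, so `rwl₂` never separates `(0,0)`
from `(2,2)`; in `G⁺` the inverse fact `r⁻(1,0)` gives `0` an in-neighbour, which `rawl₂⁺` sees
after one round. Conversely `rawl₂` never looks at in-neighbours of the first node of a pair, so
with constant `η` it cannot separate `(1,2)` from `(0,2)`, whereas `rwl₂` sees that `1` has an
in-neighbour and `0` has none. -/

namespace KG

variable {V R D X : Type}

def IsSource (G : KG V R D) (v : V) : Prop :=
  ∀ e ∈ G.edges, e.2.2 ≠ v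

theorem not_isSource_of_mem {G : KG V R D} {r : R} {u v : V} (he : (r, u, v) ∈ G.edges) :
    ¬ G.IsSource v :=
  fun hv => hv _ he rfl

variable [DecidableEq V]

theorem msgMS_eq_zero_iff (G : KG V R D) (g : V → X) (v : V) :
    G.msgMS g v = 0 ↔ G.IsSource v := by
  simp [msgMS, IsSource, Multiset.filter_eq_nil]

variable [DecidableEq R]

theorem inv_mem_aug_edges {G : KG V R D} {r : R} {u v : V} (he : (r, u, v) ∈ G.edges)
    (huv : u ≠ v) : (Sum.inr r, v, u) ∈ G.aug.edges := by
  simp only [aug, Finset.mem_union, Finset.mem_image, Finset.mem_filter]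
  exact Or.inr ⟨(r, u, v), ⟨he, huv⟩, rfl⟩

theorem isSource_aug {G : KG V R D} {v : V} (hin : G.IsSource v)
    (hout : ∀ e ∈ G.edges, e.2.1 ≠ v) : G.aug.IsSource v := by
  simp only [IsSource, aug, Finset.mem_union, Finset.mem_image, Finset.mem_filter]
  rintro _ (⟨e, he, rfl⟩ | ⟨e, ⟨he, -⟩, rfl⟩)
  exacts [hin e he, hout e he]

end KG

section Tests

variable {V R D D₂ : Type} [DecidableEq V] (G : KG V R D) (η : V → V → D₂)

theorem rawl2_congr_left {u u' : V} (h : η u = η u') : ∀ t, rawl2 G η t u = rawl2 G η t u'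
  | 0 => h
  | t + 1 => by
    funext v
    simp only [rawl2]
    rw [rawl2_congr_left h t]

theorem rawl2_succ_ne_of_isSource (t : ℕ) {u v u' v' : V} (hv : ¬ G.IsSource v)
    (hv' : G.IsSource v') : rawl2 G η (t + 1) u v ≠ rawl2 G η (t + 1) u' v' := by
  intro h
  have hmsg := congrArg Prod.snd h
  simp only [rawl2] at hmsg
  exact hv ((G.msgMS_eq_zero_iff _ v).1 (hmsg.trans ((G.msgMS_eq_zero_iff _ v').2 hv')))

theorem rwl2_succ_ne_of_isSource (t : ℕ) {u v u' v' : V} (hu : ¬ G.IsSource u)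
    (hu' : G.IsSource u') : rwl2 G η (t + 1) u v ≠ rwl2 G η (t + 1) u' v' := by
  intro h
  have hmsg := congrArg (fun c => c.2.1) h
  simp only [rwl2] at hmsg
  exact hu ((G.msgMS_eq_zero_iff _ u).1 (hmsg.trans ((G.msgMS_eq_zero_iff _ u').2 hu')))

theorem rwl2_eq_of_isSource {u v u' v' : V} (hη : η u v = η u' v') (hu : G.IsSource u)
    (hv : G.IsSource v) (hu' : G.IsSource u') (hv' : G.IsSource v') :
    ∀ t, rwl2 G η t u v = rwl2 G η t u' v'
  | 0 => hη
  | t + 1 => by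
    simp only [rwl2, (G.msgMS_eq_zero_iff _ _).2, hu, hv, hu', hv']
    rw [rwl2_eq_of_isSource hη hu hv hu' hv' t]

end Tests

def oneEdgeKG : KG (Fin 3) Unit Unit :=
  ⟨{((), 0, 1)}, fun _ => ()⟩

/-- The tests `rwl₂` and `rawl₂⁺` are incomparable in distinguishing
power: (1) some graph has pairs identified by `rwl₂` at every round but distinguished by
`rawl₂⁺` after one round, and (2) some graph has pairs identified by `rawl₂⁺` at every
round but distinguished by `rwl₂` after one round. -/
theorem rwl2_rawl2plus_incomparable :
    (∃ (V R D D₂ : Type) (iV : DecidableEq V) (iR : DecidableEq R)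
      (G : KG V R D) (η : V → V → D₂) (u v u' v' : V),
      (∀ t : ℕ, @rwl2 V R D D₂ iV G η t u v = @rwl2 V R D D₂ iV G η t u' v') ∧
      @rawl2 V (R ⊕ R) D D₂ iV (@KG.aug V R D iV iR G) η 1 u v ≠
        @rawl2 V (R ⊕ R) D D₂ iV (@KG.aug V R D iV iR G) η 1 u' v') ∧
    (∃ (V R D D₂ : Type) (iV : DecidableEq V) (iR : DecidableEq R)
      (G : KG V R D) (η : V → V → D₂) (u v u' v' : V),
      (∀ t : ℕ, @rawl2 V (R ⊕ R) D D₂ iV (@KG.aug V R D iV iR G) η t u v =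
        @rawl2 V (R ⊕ R) D D₂ iV (@KG.aug V R D iV iR G) η t u' v') ∧
      @rwl2 V R D D₂ iV G η 1 u v ≠ @rwl2 V R D D₂ iV G η 1 u' v') := by
  have hedge : ((), (0 : Fin 3), (1 : Fin 3)) ∈ oneEdgeKG.edges := Finset.mem_singleton_self _
  have hsrc0 : oneEdgeKG.IsSource 0 := by unfold KG.IsSource; decide
  have hsrc2 : oneEdgeKG.IsSource 2 := by unfold KG.IsSource; decide
  have hsrc2_aug : oneEdgeKG.aug.IsSource 2 := oneEdgeKG.isSource_aug hsrc2 (by decide)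
  have hnsrc0_aug : ¬ oneEdgeKG.aug.IsSource 0 :=
    KG.not_isSource_of_mem (KG.inv_mem_aug_edges hedge (by decide))
  refine ⟨⟨Fin 3, Unit, Unit, Unit, inferInstance, inferInstance, oneEdgeKG, fun _ _ => (),
      0, 0, 2, 2, ?_, ?_⟩, ⟨Fin 3, Unit, Unit, Unit, inferInstance, inferInstance, oneEdgeKG,
      fun _ _ => (), 1, 2, 0, 2, ?_, ?_⟩⟩
  · exact rwl2_eq_of_isSource _ _ rfl hsrc0 hsrc0 hsrc2 hsrc2
  · exact rawl2_succ_ne_of_isSource _ _ 0 hnsrc0_aug hsrc2_aug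
  · exact fun t => congrFun (rawl2_congr_left _ _ (u := 1) (u' := 0) rfl t) 2
  · exact rwl2_succ_ne_of_isSource _ _ 0 (KG.not_isSource_of_mem hedge) hsrc0
end
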